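/- arXiv:1805.12332 — 3 statements merged into one kernel-verified Lean document; each statement's English description precedes it below -/
import Mathlib

section
/- For all M>0 and p,K ∈ ℕ, and every continuous map φ : ℝ^p → ℝ^K, the average absolute error (1/(2M)^{2p}) ∫∫_{[-M,M]^p × [-M,M]^p} | -‖x - x'‖² - ⟨φ(x), φ(x')⟩ | dx dx' is at least 2pM²/3. In particular, no inner product of continuous feature maps can approximate the negative squared distance similarity on [-M,M]^p arbitrarily well in L¹ average. -/
open MeasureTheory
open scoped RealInnerProductSpace

/-- The cube `[-M, M]^p` in Euclidean space. -/
def cube (p : ℕ) (M : ℝ) : Set (EuclideanSpace ℝ (Fin p)) :=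
  {x | ∀ i, x i ∈ Set.Icc (-M) M}

/-!
Since `|a| ≥ -a`, the error dominates `∫∫ ‖x - x'‖² + ∫∫ ⟪φ x, φ x'⟫`, and the second double
integral is `‖∫ φ‖² ≥ 0` whatever `φ` is. Expanding the square, `∫∫ ‖x - x'‖²` over a finite
measure equals `2 (|μ| ∫ ‖x‖² - ‖∫ x‖²)`; on the cube the mean vanishes by symmetry and
`∫ ‖x‖² = p (M² / 3) (2M)^p`, one `M² / 3` per coordinate.
-/

section DoubleIntegral

variable {α F : Type*} [MeasurableSpace α] {μ : Measure α}
  [NormedAddCommGroup F] [InnerProductSpace ℝ F] [CompleteSpace F]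

theorem integral_integral_inner_eq_norm_sq {φ : α → F} (hφ : Integrable φ μ) :
    ∫ x, ∫ y, ⟪φ x, φ y⟫ ∂μ ∂μ = ‖∫ x, φ x ∂μ‖ ^ 2 := by
  simp_rw [integral_inner (𝕜 := ℝ) hφ, real_inner_comm (∫ y, φ y ∂μ),
    integral_inner (𝕜 := ℝ) hφ, real_inner_self_eq_norm_sq]

theorem integral_integral_norm_sub_sq_le_integral_integral_abs {E : Type*}
    [NormedAddCommGroup E] [MeasurableSpace E] {μ : Measure E} [SFinite μ] {φ : E → F}
    (hφ : Integrable φ μ) (hdist : Integrable (fun z : E × E ↦ ‖z.1 - z.2‖ ^ 2) (μ.prod μ))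
    (hkernel : Integrable (fun z : E × E ↦ ⟪φ z.1, φ z.2⟫) (μ.prod μ)) :
    ∫ x, ∫ y, ‖x - y‖ ^ 2 ∂μ ∂μ ≤ ∫ x, ∫ y, |-‖x - y‖ ^ 2 - ⟪φ x, φ y⟫| ∂μ ∂μ := by
  calc ∫ x, ∫ y, ‖x - y‖ ^ 2 ∂μ ∂μ
      ≤ ∫ x, ∫ y, ‖x - y‖ ^ 2 ∂μ ∂μ + ∫ x, ∫ y, ⟪φ x, φ y⟫ ∂μ ∂μ := by
        rw [integral_integral_inner_eq_norm_sq hφ]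
        exact le_add_of_nonneg_right (sq_nonneg _)
    _ = ∫ z, ‖z.1 - z.2‖ ^ 2 + ⟪φ z.1, φ z.2⟫ ∂μ.prod μ := by
        rw [← integral_integral_add hdist hkernel]
        exact (integral_prod _ (hdist.add hkernel)).symm
    _ ≤ ∫ z, |-‖z.1 - z.2‖ ^ 2 - ⟪φ z.1, φ z.2⟫| ∂μ.prod μ :=
        integral_mono (hdist.add hkernel) (hdist.neg.sub hkernel).abs
          fun z ↦ le_abs.2 <| Or.inr <| le_of_eq <| by ring
    _ = ∫ x, ∫ y, |-‖x - y‖ ^ 2 - ⟪φ x, φ y⟫| ∂μ ∂μ :=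
        integral_prod _ (hdist.neg.sub hkernel).abs

theorem integral_integral_norm_sub_sq [MeasurableSpace F] {μ : Measure F} [IsFiniteMeasure μ]
    (hid : Integrable id μ) (hsq : Integrable (fun x ↦ ‖x‖ ^ 2) μ) :
    ∫ x, ∫ y, ‖x - y‖ ^ 2 ∂μ ∂μ =
      2 * (μ.real Set.univ * ∫ x, ‖x‖ ^ 2 ∂μ - ‖∫ x, x ∂μ‖ ^ 2) := by
  have hinner (x : F) : Integrable (fun y ↦ 2 * ⟪x, y⟫) μ := (hid.const_inner x).const_mul 2
  have h_inner_integral (x : F) : ∫ y, ‖x - y‖ ^ 2 ∂μ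
      = μ.real Set.univ * ‖x‖ ^ 2 - 2 * ⟪∫ y, y ∂μ, x⟫ + ∫ y, ‖y‖ ^ 2 ∂μ := by
    have h : Integrable (fun y ↦ ‖x‖ ^ 2 - 2 * ⟪x, y⟫) μ := (integrable_const _).sub (hinner x)
    simp_rw [norm_sub_sq_real]
    rw [integral_add h hsq, integral_sub (integrable_const _) (hinner x), integral_const,
      integral_const_mul, integral_inner (𝕜 := ℝ) (f := fun y ↦ y) hid, real_inner_comm,
      smul_eq_mul]
  have h : Integrable (fun x ↦ μ.real Set.univ * ‖x‖ ^ 2 - 2 * ⟪∫ y, y ∂μ, x⟫) μ :=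
    (hsq.const_mul _).sub (hinner _)
  simp_rw [h_inner_integral]
  rw [integral_add h (integrable_const _), integral_sub (hsq.const_mul _) (hinner _),
    integral_const_mul, integral_const_mul, integral_inner (𝕜 := ℝ) (f := fun y ↦ y) hid,
    integral_const, smul_eq_mul, real_inner_self_eq_norm_sq]
  ring

end DoubleIntegral

theorem integral_comp_eval_pi {ι E : Type*} [Fintype ι] [DecidableEq ι] {X : ι → Type*}
    {mX : ∀ i, MeasurableSpace (X i)} {μ : (i : ι) → Measure (X i)} [∀ i, IsFiniteMeasure (μ i)]
    [NormedAddCommGroup E] [NormedSpace ℝ E] {i : ι} {f : X i → E}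
    (hf : AEStronglyMeasurable f (μ i)) :
    ∫ x, f (x i) ∂Measure.pi μ =
      (∏ j ∈ Finset.univ.erase i, (μ j).real Set.univ) • ∫ x, f x ∂μ i := by
  rw [← integral_map (measurable_pi_apply i).aemeasurable, Measure.pi_map_eval,
    integral_smul_measure]
  · simp [measureReal_def, ENNReal.toReal_prod]
  · rw [Measure.pi_map_eval]
    exact hf.smul_measure _

namespace cube

variable {p : ℕ} {M : ℝ}

theorem eq_ofLp_preimage : cube p M = WithLp.ofLp ⁻¹' Set.univ.pi fun _ ↦ Set.Icc (-M) M :=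
  Set.ext fun _ ↦ Set.mem_univ_pi.symm

theorem toLp_preimage : WithLp.toLp 2 ⁻¹' cube p M = Set.univ.pi fun _ ↦ Set.Icc (-M) M :=
  Set.ext fun _ ↦ Set.mem_univ_pi.symm

theorem isCompact : IsCompact (cube p M) := by
  rw [eq_ofLp_preimage]
  exact (PiLp.homeomorph 2 _).isCompact_preimage.2 (isCompact_univ_pi fun _ ↦ isCompact_Icc)

theorem integrable_prod {G : Type*} [NormedAddCommGroup G]
    {f : EuclideanSpace ℝ (Fin p) × EuclideanSpace ℝ (Fin p) → G} (hf : Continuous f) :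
    Integrable f ((volume.restrict (cube p M)).prod (volume.restrict (cube p M))) := by
  rw [Measure.prod_restrict, ← Measure.volume_eq_prod]
  exact hf.continuousOn.integrableOn_compact (isCompact.prod isCompact)

theorem setIntegral_eq_integral_pi {E : Type*} [NormedAddCommGroup E] [NormedSpace ℝ E]
    (f : EuclideanSpace ℝ (Fin p) → E) :
    ∫ x in cube p M, f x =
      ∫ y, f (WithLp.toLp 2 y) ∂Measure.pi fun _ ↦ volume.restrict (Set.Icc (-M) M) := by
  rw [← Measure.restrict_pi_pi, ← volume_pi, ← toLp_preimage]
  exact ((PiLp.volume_preserving_toLp (Fin p)).setIntegral_preimage_emb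
    (MeasurableEquiv.toLp 2 (Fin p → ℝ)).measurableEmbedding f (cube p M)).symm

variable (hM : 0 ≤ M)
include hM

theorem volume_real : volume.real (cube p M) = (2 * M) ^ p := by
  rw [eq_ofLp_preimage, measureReal_def, (PiLp.volume_preserving_ofLp (Fin p)).measure_preimage
    (MeasurableSet.univ_pi fun _ ↦ measurableSet_Icc).nullMeasurableSet, volume_pi_pi]
  simp only [Real.volume_Icc, Finset.prod_const, Finset.card_univ, Fintype.card_fin,
    ENNReal.toReal_pow]
  rw [ENNReal.toReal_ofReal (by linarith)]
  ring

theorem setIntegral_comp_apply {f : ℝ → ℝ}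
    (hf : AEStronglyMeasurable f (volume.restrict (Set.Icc (-M) M))) (i : Fin p) :
    ∫ x in cube p M, f (x i) = (2 * M) ^ (p - 1) * ∫ t in Set.Icc (-M) M, f t := by
  rw [setIntegral_eq_integral_pi (fun x ↦ f (x i)), integral_comp_eval_pi hf, smul_eq_mul]
  simp [Real.volume_real_Icc_of_le (by linarith : -M ≤ M), two_mul]

theorem setIntegral_apply_eq_zero (i : Fin p) : ∫ x in cube p M, x i = 0 := by
  rw [setIntegral_comp_apply hM (f := fun t ↦ t) aestronglyMeasurable_id i,
    integral_Icc_eq_integral_Ioc, ← intervalIntegral.integral_of_le (by linarith)]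
  simp [integral_id]

theorem setIntegral_id_eq_zero : ∫ x in cube p M, x = 0 := by
  ext i
  rw [eval_integral_piLp (fun j ↦ (PiLp.continuous_apply 2 _ j).continuousOn.integrableOn_compact
    isCompact) i, setIntegral_apply_eq_zero hM]
  rfl

theorem setIntegral_norm_sq : ∫ x in cube p M, ‖x‖ ^ 2 = p * M ^ 2 / 3 * (2 * M) ^ p := by
  have h_coord (i : Fin p) : ∫ x in cube p M, x i ^ 2 = (2 * M) ^ (p - 1) * (2 / 3 * M ^ 3) := by
    rw [setIntegral_comp_apply hM (f := (· ^ 2)) (by fun_prop) i,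
      integral_Icc_eq_integral_Ioc, ← intervalIntegral.integral_of_le (by linarith), integral_pow]
    ring
  simp_rw [EuclideanSpace.real_norm_sq_eq]
  rw [integral_finsetSum (f := fun i x ↦ x i ^ 2) _ fun i _ ↦
    ((PiLp.continuous_apply 2 _ i).pow 2).continuousOn.integrableOn_compact isCompact]
  simp_rw [h_coord]
  rw [Finset.sum_const, Finset.card_univ, Fintype.card_fin, nsmul_eq_mul]
  cases p with
  | zero => simp
  | succ n => rw [Nat.add_sub_cancel, pow_succ]; push_cast; ring

end cube

/-- No inner product of continuous feature maps can approximate the negative squared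
distance similarity on `[-M,M]^p` with average L¹ error below `2pM²/3`. -/
theorem ips_nsd_lower_bound (M : ℝ) (hM : 0 < M) (p K : ℕ)
    (φ : EuclideanSpace ℝ (Fin p) → EuclideanSpace ℝ (Fin K)) (hφ : Continuous φ) :
    2 * p * M ^ 2 / 3 ≤
      (1 / (2 * M) ^ (2 * p)) *
        ∫ x in cube p M, ∫ x' in cube p M,
          |(-‖x - x'‖ ^ 2) - ⟪φ x, φ x'⟫| := by
  have : IsFiniteMeasure (volume.restrict (cube p M)) :=
    isFiniteMeasure_restrict.2 cube.isCompact.measure_ne_top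
  have h_lower := integral_integral_norm_sub_sq_le_integral_integral_abs
    (μ := volume.restrict (cube p M)) (hφ.continuousOn.integrableOn_compact cube.isCompact)
    (cube.integrable_prod (by fun_prop)) (cube.integrable_prod (by fun_prop))
  rw [integral_integral_norm_sub_sq (continuous_id.continuousOn.integrableOn_compact cube.isCompact)
      ((continuous_norm.pow 2).continuousOn.integrableOn_compact cube.isCompact),
    measureReal_restrict_apply_univ, cube.volume_real hM.le, cube.setIntegral_norm_sq hM.le,
    cube.setIntegral_id_eq_zero hM.le, norm_zero] at h_lower
  rw [one_div, inv_mul_eq_div, le_div_iff₀ (by positivity), pow_mul']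
  linarith
end

section
/- (Representation theorem for SIPS) Let Y ⊂ ℝ^{K*} be a set, f* : [-M,M]^p → Y continuous, and g* : Y × Y → ℝ a conditionally positive definite kernel such that g*(f*(·), f*(·)) is continuous. Suppose the following universal approximation property holds: for every PD kernel g₀ on Y × Y with g₀(f*(·),f*(·)) continuous and every ε > 0 there exists a continuous map F : [-M,M]^p → ℝ^K (for some K) with |g₀(f*(x),f*(x')) − ⟨F(x),F(x')⟩| < ε for all x, x'; and for every continuous r : [-M,M]^p → ℝ and ε > 0 there is a function U in the approximating class with sup|r − U| < ε. Then for every ε > 0 there exist K, a continuous map F : [-M,M]^p → ℝ^K and a function U : [-M,M]^p → ℝ in the respective approximating classes such that |g*(f*(x), f*(x')) − (⟨F(x), F(x')⟩ + U(x) + U(x'))| < ε for all x, x' ∈ [-M,M]^p. -/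
/-!
Fix a base point `x₀` of the cube and put `y₀ = f*(x₀)`. By Berg's lemma the centred kernel
`g₀(y, y') = g*(y, y') - g*(y, y₀) - g*(y₀, y') + g*(y₀, y₀)` is positive definite, and by
symmetry `g*(y, y') = g₀(y, y') + r(y) + r(y')` with `r(y) = g*(y, y₀) - g*(y₀, y₀) / 2`.
Approximating `g₀ ∘ (f* × f*)` by `⟨F x, F x'⟩` to within `ε / 2` and `r ∘ f*` by `U` to
within `ε / 4` gives the shifted inner product approximation to within `ε`.
-/

open scoped RealInnerProductSpace

/-- A kernel `g` is positive definite (PD) on a subset `Y`. -/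
def IsPDKernelOn {E : Type*} (Y : Set E) (g : E → E → ℝ) : Prop :=
  ∀ (n : ℕ) (c : Fin n → ℝ) (y : Fin n → E), (∀ i, y i ∈ Y) →
    0 ≤ ∑ i, ∑ j, c i * c j * g (y i) (y j)

/-- A kernel `g` is conditionally positive definite (CPD) on a subset `Y`. -/
def IsCPDKernelOn {E : Type*} (Y : Set E) (g : E → E → ℝ) : Prop :=
  ∀ (n : ℕ) (c : Fin n → ℝ) (y : Fin n → E), (∀ i, y i ∈ Y) → (∑ i, c i) = 0 →
    0 ≤ ∑ i, ∑ j, c i * c j * g (y i) (y j)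

def centeredKernel {E : Type*} (g : E → E → ℝ) (y₀ : E) (y y' : E) : ℝ :=
  g y y' - g y y₀ - g y₀ y' + g y₀ y₀

theorem IsCPDKernelOn.isPDKernelOn_centeredKernel {E : Type*} {Y : Set E} {g : E → E → ℝ}
    (hg : IsCPDKernelOn Y g) {y₀ : E} (hy₀ : y₀ ∈ Y) :
    IsPDKernelOn Y (centeredKernel g y₀) := by
  intro n c y hy
  -- Append the point `y₀` with weight `-∑ c i`, which makes the total weight vanish.
  have hext := hg (n + 1) (Fin.snoc c (-∑ i, c i)) (Fin.snoc y y₀)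
    (Fin.lastCases (by simpa using hy₀) (by simpa using hy)) (by simp [Fin.sum_univ_castSucc])
  convert hext using 1
  simp only [centeredKernel, Fin.sum_univ_castSucc, Fin.snoc_castSucc, Fin.snoc_last, mul_sub,
    mul_add, Finset.sum_add_distrib, Finset.sum_sub_distrib, Finset.sum_mul, Finset.mul_sum,
    Finset.sum_neg_distrib, neg_mul, mul_neg]
  rw [Finset.sum_comm (f := fun x i => c i * c x * g y₀ (y x)),
    Finset.sum_comm (f := fun x i => c i * c x * g y₀ y₀)]
  ring

theorem centeredKernel_add_add {E : Type*} {g : E → E → ℝ} (hg : ∀ y y', g y y' = g y' y)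
    (y₀ y y' : E) :
    centeredKernel g y₀ y y' + (g y y₀ - g y₀ y₀ / 2) + (g y' y₀ - g y₀ y₀ / 2) =
      g y y' := by
  rw [centeredKernel, hg y₀ y']
  ring

theorem ContinuousOn.centeredKernel {X : Type*} [TopologicalSpace X] {S : Set X}
    {k : X → X → ℝ} (hk : ContinuousOn (Function.uncurry k) (S ×ˢ S)) {x₀ : X}
    (hx₀ : x₀ ∈ S) :
    ContinuousOn (Function.uncurry (centeredKernel k x₀)) (S ×ˢ S) := by
  have hleft : ContinuousOn (fun q : X × X => k q.1 x₀) (S ×ˢ S) :=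
    (hk.uncurry_right x₀ hx₀).comp continuousOn_fst Set.mapsTo_fst_prod
  have hright : ContinuousOn (fun q : X × X => k x₀ q.2) (S ×ˢ S) :=
    (hk.uncurry_left x₀ hx₀).comp continuousOn_snd Set.mapsTo_snd_prod
  exact ((hk.sub hleft).sub hright).add continuousOn_const

theorem sips_representation_general (p Kstar : ℕ) (M : ℝ) (hM : 0 < M)
    (Y : Set (EuclideanSpace ℝ (Fin Kstar)))
    (fstar : EuclideanSpace ℝ (Fin p) → EuclideanSpace ℝ (Fin Kstar))
    (hfmem : ∀ x ∈ cube p M, fstar x ∈ Y)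
    (gstar : EuclideanSpace ℝ (Fin Kstar) → EuclideanSpace ℝ (Fin Kstar) → ℝ)
    (hgsym : ∀ y y', gstar y y' = gstar y' y)
    (hgcpd : IsCPDKernelOn Y gstar)
    (hgcont : ContinuousOn (fun q : EuclideanSpace ℝ (Fin p) × EuclideanSpace ℝ (Fin p) =>
      gstar (fstar q.1) (fstar q.2)) (cube p M ×ˢ cube p M))
    (𝒰 : Set (EuclideanSpace ℝ (Fin p) → ℝ))
    (hUAT_F : ∀ g₀ : EuclideanSpace ℝ (Fin Kstar) → EuclideanSpace ℝ (Fin Kstar) → ℝ,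
      IsPDKernelOn Y g₀ →
      ContinuousOn (fun q : EuclideanSpace ℝ (Fin p) × EuclideanSpace ℝ (Fin p) =>
        g₀ (fstar q.1) (fstar q.2)) (cube p M ×ˢ cube p M) →
      ∀ ε > 0, ∃ (K : ℕ) (F : EuclideanSpace ℝ (Fin p) → EuclideanSpace ℝ (Fin K)),
        Continuous F ∧ ∀ x ∈ cube p M, ∀ x' ∈ cube p M,
          |g₀ (fstar x) (fstar x') - ⟪F x, F x'⟫| < ε)
    (hUAT_U : ∀ r : EuclideanSpace ℝ (Fin p) → ℝ, ContinuousOn r (cube p M) →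
      ∀ ε > 0, ∃ U ∈ 𝒰, ∀ x ∈ cube p M, |r x - U x| < ε) :
    ∀ ε > 0, ∃ (K : ℕ) (F : EuclideanSpace ℝ (Fin p) → EuclideanSpace ℝ (Fin K))
      (U : EuclideanSpace ℝ (Fin p) → ℝ), Continuous F ∧ U ∈ 𝒰 ∧
        ∀ x ∈ cube p M, ∀ x' ∈ cube p M,
          |gstar (fstar x) (fstar x') - (⟪F x, F x'⟫ + U x + U x')| < ε := by
  intro ε hε
  have h0 : (0 : EuclideanSpace ℝ (Fin p)) ∈ cube p M := fun i => by simp [hM.le]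
  have hk : ContinuousOn (Function.uncurry fun x x' => gstar (fstar x) (fstar x'))
      (cube p M ×ˢ cube p M) := hgcont
  set y₀ := fstar 0
  obtain ⟨K, F, hFc, hF⟩ := hUAT_F (centeredKernel gstar y₀)
    (hgcpd.isPDKernelOn_centeredKernel (hfmem 0 h0)) (hk.centeredKernel h0) (ε / 2) (by positivity)
  obtain ⟨U, hU𝒰, hU⟩ := hUAT_U (fun x => gstar (fstar x) y₀ - gstar y₀ y₀ / 2)
    ((hk.uncurry_right 0 h0).sub continuousOn_const) (ε / 4) (by positivity)
  refine ⟨K, F, U, hFc, hU𝒰, fun x hx x' hx' => ?_⟩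
  rw [← centeredKernel_add_add hgsym y₀,
    show ∀ a b c d e f : ℝ, a + b + c - (d + e + f) = (a - d) + (b - e) + (c - f) by
      intros; ring]
  exact (abs_add_three _ _ _).trans_lt (by linarith [hF x hx x' hx', hU x hx, hU x' hx'])

/-- Representation theorem for SIPS: if inner products of continuous feature maps can
approximate every PD similarity on the cube, and the class `𝒰` can uniformly approximate
every continuous function on the cube, then the shifted inner product similarity
`⟨F(x),F(x')⟩ + U(x) + U(x')` approximates any CPD similarity arbitrarily well. -/
theorem sips_representation (p Kstar : ℕ) (M : ℝ) (hM : 0 < M)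
    (Y : Set (EuclideanSpace ℝ (Fin Kstar)))
    (fstar : EuclideanSpace ℝ (Fin p) → EuclideanSpace ℝ (Fin Kstar))
    (hfmem : ∀ x ∈ cube p M, fstar x ∈ Y)
    (hfcont : ContinuousOn fstar (cube p M))
    (gstar : EuclideanSpace ℝ (Fin Kstar) → EuclideanSpace ℝ (Fin Kstar) → ℝ)
    (hgsym : ∀ y y', gstar y y' = gstar y' y)
    (hgcpd : IsCPDKernelOn Y gstar)
    (hgcont : ContinuousOn (fun q : EuclideanSpace ℝ (Fin p) × EuclideanSpace ℝ (Fin p) =>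
      gstar (fstar q.1) (fstar q.2)) (cube p M ×ˢ cube p M))
    (𝒰 : Set (EuclideanSpace ℝ (Fin p) → ℝ))
    (hUAT_F : ∀ g₀ : EuclideanSpace ℝ (Fin Kstar) → EuclideanSpace ℝ (Fin Kstar) → ℝ,
      IsPDKernelOn Y g₀ →
      ContinuousOn (fun q : EuclideanSpace ℝ (Fin p) × EuclideanSpace ℝ (Fin p) =>
        g₀ (fstar q.1) (fstar q.2)) (cube p M ×ˢ cube p M) →
      ∀ ε > 0, ∃ (K : ℕ) (F : EuclideanSpace ℝ (Fin p) → EuclideanSpace ℝ (Fin K)),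
        Continuous F ∧ ∀ x ∈ cube p M, ∀ x' ∈ cube p M,
          |g₀ (fstar x) (fstar x') - ⟪F x, F x'⟫| < ε)
    (hUAT_U : ∀ r : EuclideanSpace ℝ (Fin p) → ℝ, ContinuousOn r (cube p M) →
      ∀ ε > 0, ∃ U ∈ 𝒰, ∀ x ∈ cube p M, |r x - U x| < ε) :
    ∀ ε > 0, ∃ (K : ℕ) (F : EuclideanSpace ℝ (Fin p) → EuclideanSpace ℝ (Fin K))
      (U : EuclideanSpace ℝ (Fin p) → ℝ), Continuous F ∧ U ∈ 𝒰 ∧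
        ∀ x ∈ cube p M, ∀ x' ∈ cube p M,
          |gstar (fstar x) (fstar x') - (⟪F x, F x'⟫ + U x + U x')| < ε :=
  sips_representation_general p Kstar M hM Y fstar hfmem gstar hgsym hgcpd hgcont 𝒰 hUAT_F hUAT_U
end

section
/- The negative Jeffrey's divergence −d_Jeff is not conditionally positive definite on the set of 2-variate normal distributions: with c₁ = −2/5, c₂ = −3/5, c₃ = 1 (so ∑ c_i = 0) and y_i = N₂(μ_i, Σ_i) where μ₁ = (2,1), μ₂ = (−1,1), μ₃ = (1,2), Σ₁ = diag(1/10, 1), Σ₂ = diag(1/2, 1), Σ₃ = diag(1, 1), one has ∑_{i,j} c_i c_j (−d_Jeff(y_i, y_j)) < 0. -/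
open Matrix

/-- Kullback–Leibler divergence between two `q`-variate normal distributions
`N(μ, S)` and `N(μ', S')` (closed form). -/
noncomputable def gaussKL (q : ℕ) (μ μ' : Fin q → ℝ) (S S' : Matrix (Fin q) (Fin q) ℝ) : ℝ :=
  (1 / 2) * ((S'⁻¹ * S).trace + (μ' - μ) ⬝ᵥ (S'⁻¹ *ᵥ (μ' - μ)) - q +
    Real.log (S'.det / S.det))

/-- Jeffrey's divergence between two `q`-variate normal distributions. -/
noncomputable def gaussJeff (q : ℕ) (μ μ' : Fin q → ℝ) (S S' : Matrix (Fin q) (Fin q) ℝ) : ℝ :=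
  gaussKL q μ μ' S S' + gaussKL q μ' μ S' S

/-! In the symmetrisation the log-determinant terms cancel, so on diagonal covariances
Jeffrey's divergence is an explicit rational function of the variances and the means, and
the CPD quadratic form of the counterexample evaluates exactly to `-2387/250`. -/

theorem gaussJeff_eq (q : ℕ) (μ μ' : Fin q → ℝ) (S S' : Matrix (Fin q) (Fin q) ℝ) :
    gaussJeff q μ μ' S S' = (1 / 2) * ((S'⁻¹ * S).trace + (S⁻¹ * S').trace +
      (μ' - μ) ⬝ᵥ ((S'⁻¹ + S⁻¹) *ᵥ (μ' - μ)) - 2 * q) := by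
  have hlog : Real.log (S'.det / S.det) + Real.log (S.det / S'.det) = 0 := by
    rw [← inv_div S'.det, Real.log_inv, add_neg_cancel]
  have hswap : μ - μ' = -(μ' - μ) := (neg_sub μ' μ).symm
  rw [gaussJeff, gaussKL, gaussKL, hswap, mulVec_neg, neg_dotProduct, dotProduct_neg, neg_neg,
    add_mulVec, dotProduct_add]
  linear_combination (1 / 2 : ℝ) * hlog

theorem Matrix.inv_diagonal_of_ne_zero {n K : Type*} [Fintype n] [DecidableEq n] [Field K]
    {d : n → K} (hd : ∀ i, d i ≠ 0) : (diagonal d)⁻¹ = diagonal d⁻¹ := by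
  refine inv_eq_right_inv ?_
  rw [diagonal_mul_diagonal, ← diagonal_one]
  exact congrArg diagonal (funext fun i => mul_inv_cancel₀ (hd i))

theorem gaussJeff_diagonal (q : ℕ) (μ μ' d d' : Fin q → ℝ) (hd : ∀ i, d i ≠ 0)
    (hd' : ∀ i, d' i ≠ 0) :
    gaussJeff q μ μ' (diagonal d) (diagonal d') = (1 / 2) *
      ∑ i, (d i / d' i + d' i / d i - 2 + (μ' i - μ i) ^ 2 * ((d' i)⁻¹ + (d i)⁻¹)) := by
  rw [gaussJeff_eq, inv_diagonal_of_ne_zero hd, inv_diagonal_of_ne_zero hd',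
    diagonal_mul_diagonal, diagonal_mul_diagonal, diagonal_add, trace_diagonal, trace_diagonal]
  have htwo : (2 * q : ℝ) = ∑ _i : Fin q, (2 : ℝ) := by simp [mul_comm]
  rw [htwo, dotProduct, ← Finset.sum_add_distrib, ← Finset.sum_add_distrib,
    ← Finset.sum_sub_distrib]
  congr 1
  refine Finset.sum_congr rfl fun i _ => ?_
  simp only [mulVec_diagonal, Pi.sub_apply, Pi.inv_apply]
  ring

/-- The negative Jeffrey's divergence is not CPD on 2-variate normal distributions:
an explicit counterexample with coefficients summing to zero. -/
theorem neg_jeffreys_not_cpd :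
    ∃ (c : Fin 3 → ℝ) (μ : Fin 3 → Fin 2 → ℝ) (Sig : Fin 3 → Matrix (Fin 2) (Fin 2) ℝ),
      c = ![-2/5, -3/5, 1] ∧
      μ = ![![2, 1], ![-1, 1], ![1, 2]] ∧
      Sig = ![Matrix.diagonal ![1/10, 1], Matrix.diagonal ![1/2, 1],
             Matrix.diagonal ![1, 1]] ∧
      (∑ i, c i) = 0 ∧
      ∑ i, ∑ j, c i * c j * (-(gaussJeff 2 (μ i) (μ j) (Sig i) (Sig j))) < 0 := by
  refine ⟨_, _, _, rfl, rfl, rfl, ?_, ?_⟩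
  · norm_num [Fin.sum_univ_three, cons_val_two, tail_cons, head_cons]
  · norm_num [Fin.sum_univ_three, Fin.sum_univ_two, Fin.forall_fin_two, cons_val_two, tail_cons,
      head_cons, gaussJeff_diagonal]
end
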